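/- Let X, Y, Z be n×n complex matrices and a ∈ ℂ such that [X,Y] = Z, [X,Z] = aY and [Y,Z] = 0. Then exp(X+Y) = e^X · exp( f₁(a) Y + f₂(a) Z ), where f₁(a) = Σ_{k≥0} a^k/(2k+1)! and f₂(a) = − Σ_{k≥0} a^k/(2k+2)! (i.e. f₁(a) = sinh(√a)/√a and f₂(a) = (1 − cosh(√a))/a). -/

import Mathlib

/-!
Write `C, S, G` for the solution of `C' = a S`, `S' = C`, `G' = -S` with `(C, S, G)(0) = (1, 0, 0)`,
so that `S 1 = f₁(a)` and `G 1 = f₂(a)`. Since `ad X` maps `Y ↦ Z ↦ a Y`, the curve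
`U t = C t • Y - S t • Z` satisfies `U' = [U, X]`, whence `exp (t X) U t = Y exp (t X)`. With this,
`Φ t = exp (t X) exp (S t Y) exp (G t Z)` solves `Φ' = (X + Y) Φ`, `Φ 0 = 1`, so `Φ t = exp (t (X + Y))`;
at `t = 1` the last two factors merge because `Y` and `Z` commute.
-/

open NormedSpace Nat

theorem pow_two_mul_add_one_eq_smul_of_pow_three {R A : Type*} [CommSemiring R] [Semiring A]
    [Algebra R A] {M : A} {a : R} (h : M ^ 3 = a • M) (k : ℕ) :
    M ^ (2 * k + 1) = a ^ k • M := by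
  induction k with
  | zero => simp
  | succ k ih =>
    rw [show 2 * (k + 1) + 1 = 2 * k + 1 + 2 by ring, pow_add, ih, smul_mul_assoc,
      ← pow_succ' M 2, h, smul_smul, pow_succ]

theorem pow_two_mul_add_two_eq_smul_of_pow_three {R A : Type*} [CommSemiring R] [Semiring A]
    [Algebra R A] {M : A} {a : R} (h : M ^ 3 = a • M) (k : ℕ) :
    M ^ (2 * k + 2) = a ^ k • M ^ 2 := by
  rw [pow_succ, pow_two_mul_add_one_eq_smul_of_pow_three h, smul_mul_assoc, ← pow_two]

variable {𝕂 𝔸 : Type*} [RCLike 𝕂] [NormedRing 𝔸] [NormedAlgebra 𝕂 𝔸] [CompleteSpace 𝔸]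

theorem summable_pow_div_factorial_two_mul_add (a : 𝕂) (j : ℕ) :
    Summable fun k : ℕ => a ^ k / ((2 * k + j)! : 𝕂) := by
  refine .of_norm_bounded (Real.summable_pow_div_factorial ‖a‖) fun k => ?_
  rw [norm_div, norm_pow, RCLike.norm_natCast]
  gcongr
  omega

theorem exp_eq_of_pow_three_eq_smul {M : 𝔸} {a : 𝕂} (h : M ^ 3 = a • M) :
    exp M = 1 + (∑' k : ℕ, a ^ k / ((2 * k + 1)! : 𝕂)) • M +
      (∑' k : ℕ, a ^ k / ((2 * k + 2)! : 𝕂)) • M ^ 2 := by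
  refine (exp_series_hasSum_exp' (𝕂 := 𝕂) M).unique ?_
  rw [add_right_comm]
  refine HasSum.even_add_odd ?_ ?_
  · rw [show (1 : 𝔸) = ((2 * 0)! : 𝕂)⁻¹ • M ^ (2 * 0) by simp]
    refine HasSum.zero_add ?_
    convert (summable_pow_div_factorial_two_mul_add a 2).hasSum.smul_const (M ^ 2) using 2 with k
    rw [show 2 * (k + 1) = 2 * k + 2 by ring, pow_two_mul_add_two_eq_smul_of_pow_three h,
      smul_smul, div_eq_inv_mul]
  · convert (summable_pow_div_factorial_two_mul_add a 1).hasSum.smul_const M using 2 with k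
    rw [pow_two_mul_add_one_eq_smul_of_pow_three h, smul_smul, div_eq_inv_mul]

theorem eq_exp_smul_mul_mul_exp_smul_of_hasDerivAt {A B : 𝔸} {F : 𝕂 → 𝔸}
    (hF : ∀ t, HasDerivAt F (A * F t + F t * B) t) (t : 𝕂) :
    F t = exp (t • A) * F 0 * exp (t • B) := by
  have hexp : ∀ (D : 𝔸) s, HasDerivAt (fun s => exp ((t - s) • D)) (-(D * exp ((t - s) • D))) s :=
    fun D s => ((hasDerivAt_exp_smul_const' D (t - s)).scomp s
      ((hasDerivAt_id s).const_sub t)).congr_deriv (by simp)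
  have hK : ∀ s, HasDerivAt (fun s => exp ((t - s) • A) * F s * exp ((t - s) • B)) 0 s := by
    intro s
    refine (((hexp A s).mul (hF s)).mul (hexp B s)).congr_deriv ?_
    rw [Pi.mul_apply, ((Commute.refl A).smul_right (t - s)).exp_right.eq]
    noncomm_ring
  simpa using is_const_of_deriv_eq_zero (fun s => (hK s).differentiableAt)
    (fun s => (hK s).deriv) t 0

section Cyclic

variable {X Y Z : 𝔸} {a : 𝕂} {C S G : 𝕂 → 𝕂}

theorem exp_smul_mul_eq_of_cyclic (hXY : ⁅X, Y⁆ = Z) (hXZ : ⁅X, Z⁆ = a • Y)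
    (hC : ∀ t, HasDerivAt C (a * S t) t) (hS : ∀ t, HasDerivAt S (C t) t)
    (hC0 : C 0 = 1) (hS0 : S 0 = 0) (t : 𝕂) :
    exp (t • X) * (C t • Y - S t • Z) = Y * exp (t • X) := by
  rw [Ring.lie_def, sub_eq_iff_eq_add] at hXY hXZ
  have hU : ∀ s, X * (C s • Y - S s • Z) + ((a * S s) • Y - C s • Z) =
      (C s • Y - S s • Z) * X := by
    intro s
    simp only [mul_sub, sub_mul, mul_smul_comm, smul_mul_assoc, hXY, hXZ]
    module
  have hF : ∀ s, HasDerivAt (fun s => exp (s • X) * (C s • Y - S s • Z))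
      (0 * (exp (s • X) * (C s • Y - S s • Z)) + exp (s • X) * (C s • Y - S s • Z) * X) s := by
    intro s
    refine ((hasDerivAt_exp_smul_const' X s).mul
      (((hC s).smul_const Y).sub ((hS s).smul_const Z))).congr_deriv ?_
    rw [zero_mul, zero_add, Pi.sub_apply, mul_assoc (exp (s • X)), ← hU,
      ((Commute.refl X).smul_right s).exp_right.eq]
    noncomm_ring
  simpa [hC0, hS0] using eq_exp_smul_mul_mul_exp_smul_of_hasDerivAt hF t

theorem hasDerivAt_exp_mul_exp_mul_exp_of_cyclic (hXY : ⁅X, Y⁆ = Z) (hXZ : ⁅X, Z⁆ = a • Y)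
    (hYZ : ⁅Y, Z⁆ = 0) (hC : ∀ t, HasDerivAt C (a * S t) t) (hS : ∀ t, HasDerivAt S (C t) t)
    (hG : ∀ t, HasDerivAt G (-S t) t) (hC0 : C 0 = 1) (hS0 : S 0 = 0) (t : 𝕂) :
    HasDerivAt (fun t => exp (t • X) * exp (S t • Y) * exp (G t • Z))
      ((X + Y) * (exp (t • X) * exp (S t • Y) * exp (G t • Z))) t := by
  have hY : HasDerivAt (fun t => exp (S t • Y)) (C t • (Y * exp (S t • Y))) t :=
    (hasDerivAt_exp_smul_const' Y (S t)).scomp t (hS t)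
  have hZ : HasDerivAt (fun t => exp (G t • Z)) ((-S t) • (Z * exp (G t • Z))) t :=
    (hasDerivAt_exp_smul_const' Z (G t)).scomp t (hG t)
  have hZY : Z * (exp (S t • Y) * exp (G t • Z)) = exp (S t • Y) * (Z * exp (G t • Z)) := by
    rw [← mul_assoc, (((commute_iff_lie_eq.mpr hYZ).symm.smul_right (S t)).exp_right).eq,
      mul_assoc]
  refine (((hasDerivAt_exp_smul_const' X t).mul hY).mul hZ).congr_deriv ?_
  calc _ = X * exp (t • X) * exp (S t • Y) * exp (G t • Z) +
          exp (t • X) * (C t • Y - S t • Z) * exp (S t • Y) * exp (G t • Z) := by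
        simp only [Pi.mul_apply, mul_sub, sub_mul, mul_smul_comm, smul_mul_assoc, mul_assoc, hZY,
          add_mul]
        module
    _ = (X + Y) * (exp (t • X) * exp (S t • Y) * exp (G t • Z)) := by
        rw [exp_smul_mul_eq_of_cyclic hXY hXZ hC hS hC0 hS0]
        noncomm_ring

theorem exp_smul_add_eq_of_cyclic (hXY : ⁅X, Y⁆ = Z) (hXZ : ⁅X, Z⁆ = a • Y)
    (hYZ : ⁅Y, Z⁆ = 0) (hC : ∀ t, HasDerivAt C (a * S t) t) (hS : ∀ t, HasDerivAt S (C t) t)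
    (hG : ∀ t, HasDerivAt G (-S t) t) (hC0 : C 0 = 1) (hS0 : S 0 = 0) (hG0 : G 0 = 0) (t : 𝕂) :
    exp (t • (X + Y)) = exp (t • X) * exp (S t • Y) * exp (G t • Z) := by
  have hΦ := eq_exp_smul_mul_mul_exp_smul_of_hasDerivAt (B := (0 : 𝔸)) (fun t => by
    simpa using hasDerivAt_exp_mul_exp_mul_exp_of_cyclic hXY hXZ hYZ hC hS hG hC0 hS0 t) t
  simpa [hS0, hG0] using hΦ.symm

end Cyclic

section CyclicMatrix

open scoped Matrix.Norms.Operator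

/-- The system for `(C, S, G)` reads `v' = cyclicMatrix a *ᵥ v`, so `(C, S, G)` is the first column
of `exp (t • cyclicMatrix a)`. -/
def cyclicMatrix (a : 𝕂) : Matrix (Fin 3) (Fin 3) 𝕂 := !![0, a, 0; 1, 0, 0; 0, -1, 0]

theorem cyclicMatrix_pow_three (a : 𝕂) : cyclicMatrix a ^ 3 = a • cyclicMatrix a := by
  ext i j
  fin_cases i <;> fin_cases j <;>
    simp [cyclicMatrix, pow_succ, Matrix.mul_apply, Fin.sum_univ_three]

theorem hasDerivAt_exp_smul_cyclicMatrix_apply (a t : 𝕂) (i : Fin 3) :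
    HasDerivAt (fun t => exp (t • cyclicMatrix a) i 0)
      ((cyclicMatrix a * exp (t • cyclicMatrix a)) i 0) t := by
  have hentry := (LinearMap.toContinuousLinearMap (Matrix.entryLinearMap 𝕂 𝕂 i 0)).hasFDerivAt
    (x := exp (t • cyclicMatrix a))
  exact hentry.comp_hasDerivAt t (hasDerivAt_exp_smul_const' (cyclicMatrix a) t)

theorem exp_cyclicMatrix_apply_one_zero (a : 𝕂) :
    exp (cyclicMatrix a) 1 0 = ∑' k : ℕ, a ^ k / ((2 * k + 1)! : 𝕂) := by
  have h := congr_arg (· 1 0) (exp_eq_of_pow_three_eq_smul (cyclicMatrix_pow_three a))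
  simp [cyclicMatrix, pow_two] at h
  exact h

theorem exp_cyclicMatrix_apply_two_zero (a : 𝕂) :
    exp (cyclicMatrix a) 2 0 = -∑' k : ℕ, a ^ k / ((2 * k + 2)! : 𝕂) := by
  have h := congr_arg (· 2 0) (exp_eq_of_pow_three_eq_smul (cyclicMatrix_pow_three a))
  simp [cyclicMatrix, pow_two] at h
  exact h

end CyclicMatrix

theorem exp_add_eq_exp_mul_exp_of_cyclic {X Y Z : 𝔸} {a : 𝕂} (hXY : ⁅X, Y⁆ = Z)
    (hXZ : ⁅X, Z⁆ = a • Y) (hYZ : ⁅Y, Z⁆ = 0) :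
    exp (X + Y) = exp X * exp ((∑' k : ℕ, a ^ k / ((2 * k + 1)! : 𝕂)) • Y +
      (-∑' k : ℕ, a ^ k / ((2 * k + 2)! : 𝕂)) • Z) := by
  have hΦ := exp_smul_add_eq_of_cyclic (C := fun t => exp (t • cyclicMatrix a) 0 0)
    (S := fun t => exp (t • cyclicMatrix a) 1 0) (G := fun t => exp (t • cyclicMatrix a) 2 0)
    hXY hXZ hYZ
    (fun t => by simpa [cyclicMatrix, Matrix.mul_apply, Fin.sum_univ_three] using
      hasDerivAt_exp_smul_cyclicMatrix_apply a t 0)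
    (fun t => by simpa [cyclicMatrix, Matrix.mul_apply, Fin.sum_univ_three] using
      hasDerivAt_exp_smul_cyclicMatrix_apply a t 1)
    (fun t => by simpa [cyclicMatrix, Matrix.mul_apply, Fin.sum_univ_three] using
      hasDerivAt_exp_smul_cyclicMatrix_apply a t 2)
    (by simp) (by simp) (by simp) 1
  -- `exp_add_of_commute` is stated for normed `ℚ`-algebras.
  let := NormedAlgebra.restrictScalars ℚ 𝕂 𝔸
  rw [one_smul, one_smul, one_smul, exp_cyclicMatrix_apply_one_zero,
    exp_cyclicMatrix_apply_two_zero] at hΦ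
  rw [hΦ, mul_assoc, ← exp_add_of_commute
    (((commute_iff_lie_eq.mpr hYZ).smul_left _).smul_right _)]

theorem exp_add_of_cyclic_relations (m : ℕ) (X Y Z : Matrix (Fin m) (Fin m) ℂ) (a : ℂ)
    (h1 : ⁅X, Y⁆ = Z) (h2 : ⁅X, Z⁆ = a • Y) (h3 : ⁅Y, Z⁆ = 0)
    (f₁ f₂ : ℂ) (hf₁ : f₁ = ∑' k : ℕ, a ^ k / ((2 * k + 1).factorial : ℂ))
    (hf₂ : f₂ = -∑' k : ℕ, a ^ k / ((2 * k + 2).factorial : ℂ)) :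
    NormedSpace.exp (X + Y) =
      NormedSpace.exp X * NormedSpace.exp (f₁ • Y + f₂ • Z) := by
  subst hf₁ hf₂
  open scoped Matrix.Norms.Operator in
  exact exp_add_eq_exp_mul_exp_of_cyclic h1 h2 h3
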